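/- arXiv:2501.03469 — 3 statements merged into one kernel-verified Lean document; each statement's English description precedes it below -/
import Mathlib

section
/- Let q'_i(m,·), q''_i(m,·) ∈ ℝ^D be probability vectors for i = 1,…,N and m = 1,…,M with λ > 0, and suppose: (i) for every i and m, q'_i(m,·) = q''_i(m,·) and this common vector is one-hot; (ii) the empirical marginals are uniform, p(m, d) = 1/D for all m, d; and (iii) for every m₁ ≠ m₂, P^c(m₁, m₂; d₁, d₂) = 1/D² for all d₁, d₂. Then the IMSVD loss takes the value L = −λ·((2M − 1)/M)·log D. -/
/-- Under the optimality conditions (equal one-hot views, uniform marginals, uniform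
off-diagonal cross-joint blocks), the IMSVD loss takes the value
`L = −λ·((2M − 1)/M)·log D`. -/
theorem imsvd_loss_value_at_optimum (N M D : ℕ) (hN : 0 < N) (hM : 0 < M) (hD : 0 < D)
    (lam : ℝ) (hlam : 0 < lam)
    (q' q'' : Fin N → Fin M → Fin D → ℝ)
    (hq'nonneg : ∀ i m d, 0 ≤ q' i m d) (hq'sum : ∀ i m, ∑ d, q' i m d = 1)
    (hq''nonneg : ∀ i m d, 0 ≤ q'' i m d) (hq''sum : ∀ i m, ∑ d, q'' i m d = 1)
    -- (i) the two views agree and are one-hot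
    (honehot : ∀ i m, q' i m = q'' i m ∧
      ∃ dstar, q' i m dstar = 1 ∧ ∀ d, d ≠ dstar → q' i m d = 0)
    -- cross-joint distribution
    (Pc : Fin M → Fin M → Fin D → Fin D → ℝ)
    (hPc : ∀ m₁ m₂ d₁ d₂,
      Pc m₁ m₂ d₁ d₂ = (1 / (N : ℝ)) * ∑ i, q' i m₁ d₁ * q'' i m₂ d₂)
    -- (ii) the empirical marginals are uniform
    (hmarg : ∀ (m : Fin M) (d : Fin D), (1 / (N : ℝ)) * ∑ i, q' i m d = 1 / (D : ℝ))
    -- (iii) the off-diagonal cross-joint blocks are uniform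
    (hoff : ∀ m₁ m₂, m₁ ≠ m₂ → ∀ d₁ d₂, Pc m₁ m₂ d₁ d₂ = 1 / (D : ℝ) ^ 2)
    -- the IMSVD loss
    (L : ℝ)
    (hL : L = -(1 / ((N : ℝ) * (M : ℝ))) *
        (∑ i, ∑ m, Real.log (∑ d, q' i m d * q'' i m d)) +
      (lam / (M : ℝ) ^ 2) *
        ((∑ m, ∑ d, Pc m m d d * Real.log (Pc m m d d)) +
         ∑ m₁, ∑ m₂, if m₁ ≠ m₂ then
           ∑ d₁, ∑ d₂, Pc m₁ m₂ d₁ d₂ * Real.log (Pc m₁ m₂ d₁ d₂) else 0)) :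
    L = -lam * ((2 * (M : ℝ) - 1) / (M : ℝ)) * Real.log D := by
  have hMne : (M:ℝ) ≠ 0 := Nat.cast_ne_zero.mpr hM.ne'
  have hDne : (D:ℝ) ≠ 0 := Nat.cast_ne_zero.mpr hD.ne'
  have hsq : ∀ i m d, q' i m d * q'' i m d = q' i m d := by
    intro i m d
    obtain ⟨heq, dstar, h1, h0⟩ := honehot i m
    rw [← heq]
    by_cases hd : d = dstar
    · subst hd; rw [h1]; ring
    · rw [h0 d hd]; ring
  have hinner : ∀ i m, ∑ d, q' i m d * q'' i m d = 1 := by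
    intro i m
    simp_rw [hsq]; exact hq'sum i m
  have hdiag : ∀ (m : Fin M) (d : Fin D), Pc m m d d = 1 / (D:ℝ) := by
    intro m d
    rw [hPc]
    calc (1/(N:ℝ)) * ∑ i, q' i m d * q'' i m d
        = (1/(N:ℝ)) * ∑ i, q' i m d := by simp_rw [hsq]
      _ = 1 / (D:ℝ) := hmarg m d
  have hfirst : (∑ i, ∑ m, Real.log (∑ d, q' i m d * q'' i m d)) = 0 := by
    simp [hinner]
  have hsecond : (∑ m : Fin M, ∑ d : Fin D, Pc m m d d * Real.log (Pc m m d d))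
      = (M:ℝ) * ((D:ℝ) * ((1/(D:ℝ)) * Real.log (1/(D:ℝ)))) := by
    simp_rw [hdiag]
    simp [Finset.sum_const, Finset.card_univ, nsmul_eq_mul, mul_assoc]
  set C : ℝ := (D:ℝ) * ((D:ℝ) * ((1/(D:ℝ)^2) * Real.log (1/(D:ℝ)^2))) with hC
  have hblk : ∀ m₁ m₂ : Fin M,
      (if m₁ ≠ m₂ then ∑ d₁, ∑ d₂, Pc m₁ m₂ d₁ d₂ * Real.log (Pc m₁ m₂ d₁ d₂) else 0)
      = if m₁ ≠ m₂ then C else 0 := by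
    intro m₁ m₂
    by_cases h : m₁ = m₂
    · simp [h]
    · simp only [if_pos h, h, ne_eq, not_false_eq_true, if_true]
      have : ∀ d₁ d₂ : Fin D, Pc m₁ m₂ d₁ d₂ * Real.log (Pc m₁ m₂ d₁ d₂)
          = (1/(D:ℝ)^2) * Real.log (1/(D:ℝ)^2) := by
        intro d₁ d₂; rw [hoff m₁ m₂ h d₁ d₂]
      simp_rw [this]
      simp [Finset.sum_const, Finset.card_univ, nsmul_eq_mul, hC, mul_assoc]
  have hrow : ∀ m₁ : Fin M, (∑ m₂, if m₁ ≠ m₂ then C else 0) = (M:ℝ) * C - C := by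
    intro m₁
    have h1 : ∀ m₂ : Fin M, (if m₁ ≠ m₂ then C else 0) = C - (if m₁ = m₂ then C else 0) := by
      intro m₂; by_cases h : m₁ = m₂ <;> simp [h]
    simp_rw [h1, Finset.sum_sub_distrib, Finset.sum_const, Finset.card_univ,
      Finset.sum_ite_eq, Fintype.card_fin, nsmul_eq_mul]
    simp
  have hthird : (∑ m₁, ∑ m₂, if m₁ ≠ m₂ then
      ∑ d₁, ∑ d₂, Pc m₁ m₂ d₁ d₂ * Real.log (Pc m₁ m₂ d₁ d₂) else 0)
      = (M:ℝ) * ((M:ℝ) * C - C) := by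
    simp_rw [hblk, hrow]
    simp [Finset.sum_const, Finset.card_univ, nsmul_eq_mul]
    ring
  rw [hL, hfirst, hsecond, hthird, hC]
  have hlog1 : Real.log (1/(D:ℝ)) = -Real.log D := by
    rw [one_div, Real.log_inv]
  have hlog2 : Real.log (1/(D:ℝ)^2) = -(2 * Real.log D) := by
    rw [one_div, Real.log_inv, Real.log_pow]
    push_cast; ring
  rw [hlog1, hlog2]
  field_simp
  ring
end

section
/- Let D ≥ 3, λ > 0, and let q'_i(m,·), q''_i(m,·) ∈ ℝ^D be probability vectors for i = 1,…,N and m = 1,…,M with ⟨q'_i(m,·), q''_i(m,·)⟩ > 0 for all i, m. Then the IMSVD loss satisfies the lower bound L ≥ −λ·((2M − 1)/M)·log D. -/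
open Finset Real

lemma xlogx_div_ge (x t : ℝ) (hx : 0 ≤ x) (ht : 0 < t) :
    x - t ≤ x * Real.log (x / t) := by
  rcases eq_or_lt_of_le hx with h | h
  · simp [← h]; linarith
  · have h1 : Real.log (t / x) ≤ t / x - 1 := Real.log_le_sub_one_of_pos (by positivity)
    have h2 : Real.log (t / x) = - Real.log (x / t) := by
      rw [← Real.log_inv]; congr 1; field_simp
    rw [h2] at h1
    have h3 : (-Real.log (x/t)) * x ≤ (t/x - 1) * x := mul_le_mul_of_nonneg_right h1 h.le
    rw [sub_mul, div_mul_cancel₀ t h.ne'] at h3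
    nlinarith [h3]

lemma entropy_lb {α : Type*} [Fintype α] (p : α → ℝ) (hp : ∀ a, 0 ≤ p a)
    (hs : ∑ a, p a ≤ 1) (hK : 1 ≤ Real.log (Fintype.card α)) :
    -Real.log (Fintype.card α) ≤ ∑ a, p a * Real.log (p a) := by
  set K := ((Fintype.card α : ℕ) : ℝ) with hKdef
  set s := ∑ a, p a with hsdef
  have hs0 : 0 ≤ s := Finset.sum_nonneg fun a _ => hp a
  rcases eq_or_lt_of_le hs0 with h0 | h0
  · have hz : ∀ a ∈ Finset.univ, p a = 0 :=
      (Finset.sum_eq_zero_iff_of_nonneg (fun a _ => hp a)).mp h0.symm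
    have : ∑ a, p a * Real.log (p a) = 0 :=
      Finset.sum_eq_zero fun a ha => by rw [hz a ha]; ring
    rw [this]; linarith
  · have hcard : Fintype.card α ≠ 0 := by
      intro h
      rw [hKdef] at hK
      rw [h] at hK
      norm_num at hK
    have hKpos : 0 < K := by
      rw [hKdef]; exact_mod_cast Nat.pos_of_ne_zero hcard
    set t := s / K with htdef
    have htpos : 0 < t := by positivity
    have key : ∀ a, p a - t ≤ p a * Real.log (p a) - p a * Real.log t := by
      intro a
      have h1 := xlogx_div_ge (p a) t (hp a) htpos
      rcases eq_or_lt_of_le (hp a) with h2 | h2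
      · simp [← h2]; linarith
      · rwa [Real.log_div h2.ne' htpos.ne', mul_sub] at h1
    have hsum : s - K * t ≤ ∑ a, (p a * Real.log (p a)) - s * Real.log t := by
      have := Finset.sum_le_sum (fun a (_ : a ∈ Finset.univ) => key a)
      simp only [Finset.sum_sub_distrib] at this
      rw [Finset.sum_const, Finset.card_univ, ← Finset.sum_mul] at this
      simpa [hsdef, hKdef, nsmul_eq_mul, mul_comm] using this
    have hKt : K * t = s := by rw [htdef]; field_simp
    have hlogt : Real.log t = Real.log s - Real.log K :=
      Real.log_div h0.ne' hKpos.ne'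
    have hslogs : s - 1 ≤ s * Real.log s := by
      have := xlogx_div_ge s 1 hs0 one_pos
      simpa using this
    nlinarith [mul_nonneg (by linarith : (0:ℝ) ≤ 1 - s) (by linarith : (0:ℝ) ≤ Real.log K - 1)]

/-- Lower bound for the IMSVD loss: for `D ≥ 3` and `λ > 0`,
`L ≥ −λ·((2M − 1)/M)·log D`. -/
theorem imsvd_loss_lower_bound (N M D : ℕ) (hN : 0 < N) (hM : 0 < M) (hD : 3 ≤ D)
    (lam : ℝ) (hlam : 0 < lam)
    (q' q'' : Fin N → Fin M → Fin D → ℝ)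
    (hq'nonneg : ∀ i m d, 0 ≤ q' i m d) (hq'sum : ∀ i m, ∑ d, q' i m d = 1)
    (hq''nonneg : ∀ i m d, 0 ≤ q'' i m d) (hq''sum : ∀ i m, ∑ d, q'' i m d = 1)
    (hpos : ∀ i m, 0 < ∑ d, q' i m d * q'' i m d)
    -- cross-joint distribution
    (Pc : Fin M → Fin M → Fin D → Fin D → ℝ)
    (hPc : ∀ m₁ m₂ d₁ d₂,
      Pc m₁ m₂ d₁ d₂ = (1 / (N : ℝ)) * ∑ i, q' i m₁ d₁ * q'' i m₂ d₂)
    -- the IMSVD loss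
    (L : ℝ)
    (hL : L = -(1 / ((N : ℝ) * (M : ℝ))) *
        (∑ i, ∑ m, Real.log (∑ d, q' i m d * q'' i m d)) +
      (lam / (M : ℝ) ^ 2) *
        ((∑ m, ∑ d, Pc m m d d * Real.log (Pc m m d d)) +
         ∑ m₁, ∑ m₂, if m₁ ≠ m₂ then
           ∑ d₁, ∑ d₂, Pc m₁ m₂ d₁ d₂ * Real.log (Pc m₁ m₂ d₁ d₂) else 0)) :
    -lam * ((2 * (M : ℝ) - 1) / (M : ℝ)) * Real.log D ≤ L := by
  have hNR : (0:ℝ) < N := by exact_mod_cast hN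
  have hMR : (0:ℝ) < M := by exact_mod_cast hM
  have hDR : (3:ℝ) ≤ D := by exact_mod_cast hD
  have hDpos : (0:ℝ) < D := by linarith
  have hlogD : 1 ≤ Real.log D := by
    rw [Real.le_log_iff_exp_le hDpos]
    have := Real.exp_one_lt_d9
    linarith
  have hlogDnn : 0 ≤ Real.log D := by linarith
  -- inner products ≤ 1
  have hip_le : ∀ i m, ∑ d, q' i m d * q'' i m d ≤ 1 := by
    intro i m
    calc ∑ d, q' i m d * q'' i m d ≤ ∑ d, q' i m d := by
          apply Finset.sum_le_sum
          intro d _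
          have h1 : q'' i m d ≤ 1 := by
            rw [← hq''sum i m]
            exact Finset.single_le_sum (fun d' _ => hq''nonneg i m d') (Finset.mem_univ d)
          nlinarith [hq'nonneg i m d]
      _ = 1 := hq'sum i m
  -- first term nonneg
  have hT1 : 0 ≤ -(1 / ((N : ℝ) * (M : ℝ))) *
      (∑ i, ∑ m, Real.log (∑ d, q' i m d * q'' i m d)) := by
    have hS : (∑ i, ∑ m, Real.log (∑ d, q' i m d * q'' i m d)) ≤ 0 := by
      apply Finset.sum_nonpos
      intro i _
      apply Finset.sum_nonpos
      intro m _
      exact Real.log_nonpos (le_of_lt (hpos i m)) (hip_le i m)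
    have hc : (0:ℝ) ≤ 1 / ((N : ℝ) * (M : ℝ)) := by positivity
    nlinarith
  -- Pc nonneg
  have hPcnn : ∀ m₁ m₂ d₁ d₂, 0 ≤ Pc m₁ m₂ d₁ d₂ := by
    intro m₁ m₂ d₁ d₂
    rw [hPc]
    apply mul_nonneg (by positivity)
    exact Finset.sum_nonneg fun i _ => mul_nonneg (hq'nonneg i m₁ d₁) (hq''nonneg i m₂ d₂)
  -- diagonal entropy bound
  have hdiag : ∀ m, -Real.log D ≤ ∑ d, Pc m m d d * Real.log (Pc m m d d) := by
    intro m
    have hsum : ∑ d, Pc m m d d ≤ 1 := by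
      have heq : ∑ d, Pc m m d d = (1 / (N:ℝ)) * ∑ i, ∑ d, q' i m d * q'' i m d := by
        simp_rw [hPc, ← Finset.mul_sum]
        rw [Finset.sum_comm]
      rw [heq]
      have hb : ∑ i, ∑ d, q' i m d * q'' i m d ≤ ∑ i : Fin N, (1:ℝ) :=
        Finset.sum_le_sum fun i _ => hip_le i m
      simp only [Finset.sum_const, Finset.card_univ, Fintype.card_fin, nsmul_eq_mul,
        mul_one] at hb
      rw [div_mul_eq_mul_div, one_mul, div_le_one hNR]
      linarith
    have := entropy_lb (fun d => Pc m m d d) (fun d => hPcnn m m d d) hsum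
      (by simpa using hlogD)
    simpa using this
  -- off-diagonal entropy bound
  have hoff : ∀ m₁ m₂, -(2 * Real.log D) ≤
      ∑ d₁, ∑ d₂, Pc m₁ m₂ d₁ d₂ * Real.log (Pc m₁ m₂ d₁ d₂) := by
    intro m₁ m₂
    have hsum : ∑ d₁, ∑ d₂, Pc m₁ m₂ d₁ d₂ ≤ 1 := by
      have heq : ∑ d₁, ∑ d₂, Pc m₁ m₂ d₁ d₂ =
          (1 / (N:ℝ)) * ∑ i, (∑ d₁, q' i m₁ d₁) * (∑ d₂, q'' i m₂ d₂) := by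
        simp_rw [hPc, ← Finset.mul_sum]
        congr 1
        simp_rw [Finset.sum_mul, Finset.mul_sum]
        calc ∑ d₁ : Fin D, ∑ d₂ : Fin D, ∑ i : Fin N, q' i m₁ d₁ * q'' i m₂ d₂
            = ∑ d₁ : Fin D, ∑ i : Fin N, ∑ d₂ : Fin D, q' i m₁ d₁ * q'' i m₂ d₂ :=
              Finset.sum_congr rfl fun d₁ _ => Finset.sum_comm
          _ = ∑ i : Fin N, ∑ d₁ : Fin D, ∑ d₂ : Fin D, q' i m₁ d₁ * q'' i m₂ d₂ :=
              Finset.sum_comm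
      rw [heq]
      have hval : ∑ i, (∑ d₁, q' i m₁ d₁) * (∑ d₂, q'' i m₂ d₂) = (N:ℝ) := by
        simp_rw [hq'sum, hq''sum]
        simp
      rw [hval, div_mul_eq_mul_div, one_mul, div_self hNR.ne']
    have hlog2 : Real.log ((Fintype.card (Fin D × Fin D) : ℕ) : ℝ) = 2 * Real.log D := by
      have : ((Fintype.card (Fin D × Fin D) : ℕ) : ℝ) = (D:ℝ) * D := by
        rw [Fintype.card_prod, Fintype.card_fin]; push_cast; ring
      rw [this, Real.log_mul hDpos.ne' hDpos.ne']; ring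
    have hsum' : ∑ x : Fin D × Fin D, Pc m₁ m₂ x.1 x.2 ≤ 1 := by
      rw [Fintype.sum_prod_type]; exact hsum
    have := entropy_lb (fun x : Fin D × Fin D => Pc m₁ m₂ x.1 x.2)
      (fun x => hPcnn m₁ m₂ x.1 x.2) hsum' (by rw [hlog2]; linarith)
    rw [hlog2, Fintype.sum_prod_type] at this
    exact this
  -- sum of diagonal terms
  have hEdiag : -((M:ℝ) * Real.log D) ≤ ∑ m, ∑ d, Pc m m d d * Real.log (Pc m m d d) := by
    have h := Finset.sum_le_sum (fun m (_ : m ∈ Finset.univ) => hdiag m)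
    simp only [Finset.sum_const, Finset.card_univ, Fintype.card_fin, nsmul_eq_mul] at h
    calc -((M:ℝ) * Real.log D) = (M:ℝ) * (-Real.log D) := by ring
      _ ≤ _ := h
  -- sum of off-diagonal terms
  have hEoff : -(((M:ℝ)^2 - M) * (2 * Real.log D)) ≤
      ∑ m₁, ∑ m₂, if m₁ ≠ m₂ then
        ∑ d₁, ∑ d₂, Pc m₁ m₂ d₁ d₂ * Real.log (Pc m₁ m₂ d₁ d₂) else 0 := by
    have step : ∀ m₁ : Fin M, ∑ m₂, (if m₁ ≠ m₂ then -(2*Real.log D) else 0) ≤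
        ∑ m₂, (if m₁ ≠ m₂ then
          ∑ d₁, ∑ d₂, Pc m₁ m₂ d₁ d₂ * Real.log (Pc m₁ m₂ d₁ d₂) else 0) := by
      intro m₁
      apply Finset.sum_le_sum
      intro m₂ _
      split_ifs with h
      · exact hoff m₁ m₂
      · exact le_rfl
    have hcount : ∀ m₁ : Fin M, ∑ m₂, (if m₁ ≠ m₂ then -(2*Real.log D) else 0) =
        ((M:ℝ) - 1) * (-(2*Real.log D)) := by
      intro m₁
      have hsplit : ∀ m₂ : Fin M, (if m₁ ≠ m₂ then -(2*Real.log D) else 0) =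
          -(2*Real.log D) - (if m₁ = m₂ then -(2*Real.log D) else 0) := by
        intro m₂
        by_cases h : m₁ = m₂
        · rw [if_neg (by simp [h]), if_pos h]; ring
        · rw [if_pos h, if_neg h]; ring
      simp_rw [hsplit]
      rw [Finset.sum_sub_distrib, Finset.sum_ite_eq, Finset.sum_const, Finset.card_univ,
        Fintype.card_fin]
      simp
      ring
    calc -(((M:ℝ)^2 - M) * (2 * Real.log D))
        = ∑ _m₁ : Fin M, ((M:ℝ) - 1) * (-(2*Real.log D)) := by
          simp [Finset.sum_const, Finset.card_univ]
          ring
      _ ≤ _ := by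
          apply Finset.sum_le_sum
          intro m₁ _
          rw [← hcount m₁]
          exact step m₁
  -- assemble
  rw [hL]
  have hEntropy : -((2*(M:ℝ)^2 - M) * Real.log D) ≤
      (∑ m, ∑ d, Pc m m d d * Real.log (Pc m m d d)) +
      ∑ m₁, ∑ m₂, if m₁ ≠ m₂ then
        ∑ d₁, ∑ d₂, Pc m₁ m₂ d₁ d₂ * Real.log (Pc m₁ m₂ d₁ d₂) else 0 := by
    have := add_le_add hEdiag hEoff
    nlinarith [this]
  have hcoef : (0:ℝ) < lam / (M:ℝ)^2 := by positivity
  have h2 : (lam / (M:ℝ)^2) * (-((2*(M:ℝ)^2 - M) * Real.log D)) ≤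
      (lam / (M:ℝ)^2) * ((∑ m, ∑ d, Pc m m d d * Real.log (Pc m m d d)) +
      ∑ m₁, ∑ m₂, if m₁ ≠ m₂ then
        ∑ d₁, ∑ d₂, Pc m₁ m₂ d₁ d₂ * Real.log (Pc m₁ m₂ d₁ d₂) else 0) :=
    mul_le_mul_of_nonneg_left hEntropy hcoef.le
  have heq : (lam / (M:ℝ)^2) * (-((2*(M:ℝ)^2 - M) * Real.log D)) =
      -lam * ((2 * (M : ℝ) - 1) / (M : ℝ)) * Real.log D := by
    field_simp
  linarith [h2, hT1, heq]
end

section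
/- (IMSVD Theorem.) Let D ≥ 3, λ > 0, and let q'_i(m,·), q''_i(m,·) ∈ ℝ^D be probability vectors for i = 1,…,N and m = 1,…,M with ⟨q'_i(m,·), q''_i(m,·)⟩ > 0 for all i, m. If the IMSVD loss attains its minimal possible value L = −λ·((2M − 1)/M)·log D, then: (1) for every i and m, q'_i(m,·) = q''_i(m,·) and this common vector is one-hot; (2) the empirical marginals are uniform, p(m, d) = 1/D for all m and d; (3) for all m₁ ≠ m₂ and all d₁, d₂, the cross-joint distribution equals the self-joint distribution and is uniform, P(m₁, m₂; d₁, d₂) = P^c(m₁, m₂; d₁, d₂) = 1/D²; and (4) the mutual information between any two distinct variables is zero. -/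
open Finset

lemma ptwise_gibbs {a x : ℝ} (ha : 0 < a) (hx : 0 ≤ x) :
    x - a ≤ x * Real.log x - x * Real.log a := by
  rcases eq_or_lt_of_le hx with h | h
  · simp [← h]; linarith
  · have h1 := Real.log_le_sub_one_of_pos (show 0 < a / x by positivity)
    rw [Real.log_div (ne_of_gt ha) (ne_of_gt h)] at h1
    have h2 := mul_le_mul_of_nonneg_left h1 (le_of_lt h)
    have h3 : x * (a / x - 1) = a - x := by field_simp
    nlinarith

lemma ptwise_gibbs_eq {a x : ℝ} (ha : 0 < a) (hx : 0 ≤ x)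
    (h : x * Real.log x - x * Real.log a = x - a) : x = a := by
  rcases eq_or_lt_of_le hx with h0 | h0
  · exfalso; rw [← h0] at h; simp at h; linarith
  · by_contra hne
    have h1 : a / x ≠ 1 := by
      intro hc; exact hne (by field_simp at hc; linarith)
    have h2 := Real.log_lt_sub_one_of_pos (show 0 < a / x by positivity) h1
    rw [Real.log_div (ne_of_gt ha) (ne_of_gt h0)] at h2
    have h3 := mul_lt_mul_of_pos_left h2 h0
    have h4 : x * (a / x - 1) = a - x := by field_simp
    nlinarith

lemma slack_nonneg {a x : ℝ} (ha : 0 < a) (hx : 0 ≤ x) :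
    0 ≤ x * Real.log x - x * Real.log a - (x - a) := by
  linarith [ptwise_gibbs ha hx]

lemma slack_eq_zero {a x : ℝ} (ha : 0 < a) (hx : 0 ≤ x)
    (h : x * Real.log x - x * Real.log a - (x - a) = 0) : x = a :=
  ptwise_gibbs_eq ha hx (by linarith)

lemma sum_slack {ι : Type*} [Fintype ι] (x : ι → ℝ) (a : ℝ) :
    ∑ i, (x i * Real.log (x i) - x i * Real.log a - (x i - a)) =
      (∑ i, x i * Real.log (x i)) - (∑ i, x i) * Real.log a
        - ((∑ i, x i) - (Fintype.card ι : ℝ) * a) := by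
  rw [Finset.sum_sub_distrib, Finset.sum_sub_distrib, ← Finset.sum_mul,
    Finset.sum_sub_distrib]
  simp [Finset.sum_const, Finset.card_univ, nsmul_eq_mul]

lemma onehot_of_inner_eq_one {D : ℕ} (a b : Fin D → ℝ)
    (hann : ∀ d, 0 ≤ a d) (hasum : ∑ d, a d = 1)
    (hbnn : ∀ d, 0 ≤ b d) (hbsum : ∑ d, b d = 1)
    (h : ∑ d, a d * b d = 1) :
    a = b ∧ ∃ dstar, a dstar = 1 ∧ ∀ d, d ≠ dstar → a d = 0 := by
  have hble : ∀ d, b d ≤ 1 := fun d => by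
    calc b d ≤ ∑ d', b d' := Finset.single_le_sum (fun d' _ => hbnn d') (mem_univ d)
    _ = 1 := hbsum
  have hale : ∀ d, a d ≤ 1 := fun d => by
    calc a d ≤ ∑ d', a d' := Finset.single_le_sum (fun d' _ => hann d') (mem_univ d)
    _ = 1 := hasum
  have h1 : ∑ d, a d * (1 - b d) = 0 := by
    have : ∑ d, a d * (1 - b d) = (∑ d, a d) - ∑ d, a d * b d := by
      rw [← Finset.sum_sub_distrib]; apply Finset.sum_congr rfl; intros; ring
    rw [this, hasum, h]; ring
  have h2 : ∑ d, b d * (1 - a d) = 0 := by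
    have : ∑ d, b d * (1 - a d) = (∑ d, b d) - ∑ d, a d * b d := by
      rw [← Finset.sum_sub_distrib]; apply Finset.sum_congr rfl; intros; ring
    rw [this, hbsum, h]; ring
  have k1 : ∀ d, a d * (1 - b d) = 0 := by
    have := (Finset.sum_eq_zero_iff_of_nonneg (fun d _ => by
      have := hble d; have := hann d; nlinarith)).mp h1
    exact fun d => this d (mem_univ d)
  have k2 : ∀ d, b d * (1 - a d) = 0 := by
    have := (Finset.sum_eq_zero_iff_of_nonneg (fun d _ => by
      have := hale d; have := hbnn d; nlinarith)).mp h2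
    exact fun d => this d (mem_univ d)
  obtain ⟨dstar, hds⟩ : ∃ d, a d ≠ 0 := by
    by_contra hc; push_neg at hc
    rw [Finset.sum_eq_zero (fun d _ => hc d)] at hasum; norm_num at hasum
  have hbds : b dstar = 1 := by have := k1 dstar; rcases mul_eq_zero.mp this with h | h
                                · exact absurd h hds
                                · linarith
  have hads : a dstar = 1 := by
    have := k2 dstar; rw [hbds] at this; simp at this; linarith
  have haz : ∀ d, d ≠ dstar → a d = 0 := by
    intro d hd
    have : ∑ d' ∈ univ.erase dstar, a d' = 0 := by
      linarith [Finset.sum_erase_add univ a (mem_univ dstar), hasum, hads]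
    exact (Finset.sum_eq_zero_iff_of_nonneg (fun d' _ => hann d')).mp this d
      (Finset.mem_erase.mpr ⟨hd, mem_univ d⟩)
  have hbz : ∀ d, d ≠ dstar → b d = 0 := by
    intro d hd
    have : ∑ d' ∈ univ.erase dstar, b d' = 0 := by
      linarith [Finset.sum_erase_add univ b (mem_univ dstar), hbsum, hbds]
    exact (Finset.sum_eq_zero_iff_of_nonneg (fun d' _ => hbnn d')).mp this d
      (Finset.mem_erase.mpr ⟨hd, mem_univ d⟩)
  refine ⟨funext fun d => ?_, dstar, hads, haz⟩
  by_cases hd : d = dstar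
  · rw [hd, hads, hbds]
  · rw [haz d hd, hbz d hd]

lemma three_nonneg_zero {c1 c2 a b c : ℝ} (hc1 : 0 < c1) (hc2 : 0 < c2)
    (ha : 0 ≤ a) (hb : 0 ≤ b) (hc : 0 ≤ c) (h : c1 * a + (c2 * b + c2 * c) = 0) :
    a = 0 ∧ b = 0 ∧ c = 0 := by
  have h1 : 0 ≤ c1 * a := mul_nonneg hc1.le ha
  have h2 : 0 ≤ c2 * b := mul_nonneg hc2.le hb
  have h3 : 0 ≤ c2 * c := mul_nonneg hc2.le hc
  have e1 : c1 * a = 0 := by linarith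
  have e2 : c2 * b = 0 := by linarith
  have e3 : c2 * c = 0 := by linarith
  exact ⟨(mul_eq_zero.mp e1).resolve_left hc1.ne',
    (mul_eq_zero.mp e2).resolve_left hc2.ne',
    (mul_eq_zero.mp e3).resolve_left hc2.ne'⟩

set_option maxHeartbeats 1000000 in

/-- **IMSVD Theorem.** If the IMSVD loss attains its minimal possible value
`L = −λ·((2M − 1)/M)·log D` (for `D ≥ 3`, `λ > 0`), then:
(1) for every `i, m`, the two views agree and are one-hot;
(2) the empirical marginals are uniform `1/D`;
(3) for all `m₁ ≠ m₂`, the cross-joint distribution equals the self-joint distribution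
and is uniform `1/D²`; and
(4) the mutual information between any two distinct variables is zero. -/
theorem imsvd_theorem (N M D : ℕ) (hN : 0 < N) (hM : 0 < M) (hD : 3 ≤ D)
    (lam : ℝ) (hlam : 0 < lam)
    (q' q'' : Fin N → Fin M → Fin D → ℝ)
    (hq'nonneg : ∀ i m d, 0 ≤ q' i m d) (hq'sum : ∀ i m, ∑ d, q' i m d = 1)
    (hq''nonneg : ∀ i m d, 0 ≤ q'' i m d) (hq''sum : ∀ i m, ∑ d, q'' i m d = 1)
    (hpos : ∀ i m, 0 < ∑ d, q' i m d * q'' i m d)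
    -- cross-joint distribution
    (Pc : Fin M → Fin M → Fin D → Fin D → ℝ)
    (hPc : ∀ m₁ m₂ d₁ d₂,
      Pc m₁ m₂ d₁ d₂ = (1 / (N : ℝ)) * ∑ i, q' i m₁ d₁ * q'' i m₂ d₂)
    -- self-joint distribution of the first view
    (P : Fin M → Fin M → Fin D → Fin D → ℝ)
    (hP : ∀ m₁ m₂ d₁ d₂,
      P m₁ m₂ d₁ d₂ = (1 / (N : ℝ)) * ∑ i, q' i m₁ d₁ * q' i m₂ d₂)
    -- empirical marginal
    (p : Fin M → Fin D → ℝ)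
    (hp : ∀ m d, p m d = (1 / (N : ℝ)) * ∑ i, q' i m d)
    -- the IMSVD loss
    (L : ℝ)
    (hL : L = -(1 / ((N : ℝ) * (M : ℝ))) *
        (∑ i, ∑ m, Real.log (∑ d, q' i m d * q'' i m d)) +
      (lam / (M : ℝ) ^ 2) *
        ((∑ m, ∑ d, Pc m m d d * Real.log (Pc m m d d)) +
         ∑ m₁, ∑ m₂, if m₁ ≠ m₂ then
           ∑ d₁, ∑ d₂, Pc m₁ m₂ d₁ d₂ * Real.log (Pc m₁ m₂ d₁ d₂) else 0))
    -- the loss attains its minimal possible value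
    (hmin : L = -lam * ((2 * (M : ℝ) - 1) / (M : ℝ)) * Real.log D) :
    (∀ i m, q' i m = q'' i m ∧
      ∃ dstar, q' i m dstar = 1 ∧ ∀ d, d ≠ dstar → q' i m d = 0) ∧
    (∀ m d, p m d = 1 / (D : ℝ)) ∧
    (∀ m₁ m₂, m₁ ≠ m₂ → ∀ d₁ d₂,
      P m₁ m₂ d₁ d₂ = Pc m₁ m₂ d₁ d₂ ∧ P m₁ m₂ d₁ d₂ = 1 / (D : ℝ) ^ 2) ∧
    (∀ m₁ m₂, m₁ ≠ m₂ →
      (∑ d₁, ∑ d₂, P m₁ m₂ d₁ d₂ *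
        Real.log (P m₁ m₂ d₁ d₂ / (p m₁ d₁ * p m₂ d₂))) = 0) := by
  have hM0 : (M : ℝ) ≠ 0 := Nat.cast_ne_zero.mpr hM.ne'
  have hN0 : (N : ℝ) ≠ 0 := Nat.cast_ne_zero.mpr hN.ne'
  have hNpos : (0:ℝ) < N := Nat.cast_pos.mpr hN
  have hMpos : (0:ℝ) < M := Nat.cast_pos.mpr hM
  have hDpos : (0:ℝ) < D := by positivity
  have hDcast : (3:ℝ) ≤ (D:ℝ) := by exact_mod_cast hD
  have hlogD : 1 < Real.log D := by
    rw [Real.lt_log_iff_exp_lt hDpos]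
    calc Real.exp 1 < 2.7182818286 := Real.exp_one_lt_d9
    _ ≤ (D:ℝ) := by linarith
  -- abbreviations
  set t : Fin N → Fin M → ℝ := fun i m => ∑ d, q' i m d * q'' i m d with ht
  set Slog : ℝ := ∑ i, ∑ m, Real.log (∑ d, q' i m d * q'' i m d) with hSlog
  set Ediag : Fin M → ℝ := fun m => ∑ d, Pc m m d d * Real.log (Pc m m d d) with hEdiag
  set Eoff : Fin M → Fin M → ℝ :=
    fun m₁ m₂ => ∑ d₁, ∑ d₂, Pc m₁ m₂ d₁ d₂ * Real.log (Pc m₁ m₂ d₁ d₂) with hEoff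
  -- basic facts
  have htpos : ∀ i m, 0 < t i m := fun i m => hpos i m
  have hq''le : ∀ i m d, q'' i m d ≤ 1 := fun i m d => by
    calc q'' i m d ≤ ∑ d', q'' i m d' :=
      Finset.single_le_sum (fun d' _ => hq''nonneg i m d') (mem_univ d)
    _ = 1 := hq''sum i m
  have htle : ∀ i m, t i m ≤ 1 := fun i m => by
    calc t i m ≤ ∑ d, q' i m d * 1 := Finset.sum_le_sum (fun d _ =>
      mul_le_mul_of_nonneg_left (hq''le i m d) (hq'nonneg i m d))
    _ = 1 := by simpa using hq'sum i m
  have hPcnn : ∀ m₁ m₂ d₁ d₂, 0 ≤ Pc m₁ m₂ d₁ d₂ := fun m₁ m₂ d₁ d₂ => by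
    rw [hPc]
    exact mul_nonneg (by positivity) (Finset.sum_nonneg fun i _ =>
      mul_nonneg (hq'nonneg i m₁ d₁) (hq''nonneg i m₂ d₂))
  -- total mass of cross-joint (off-diagonal style) is 1
  have hPcsum : ∀ m₁ m₂, ∑ d₁, ∑ d₂, Pc m₁ m₂ d₁ d₂ = 1 := by
    intro m₁ m₂
    have : ∀ d₁, ∑ d₂, Pc m₁ m₂ d₁ d₂ = (1/(N:ℝ)) * ∑ i, q' i m₁ d₁ := by
      intro d₁
      simp only [hPc, ← Finset.mul_sum]
      congr 1
      rw [Finset.sum_comm]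
      apply Finset.sum_congr rfl
      intro i _
      rw [← Finset.mul_sum, hq''sum i m₂, mul_one]
    simp only [this]
    rw [← Finset.mul_sum, Finset.sum_comm]
    have : ∑ i, ∑ d₁, q' i m₁ d₁ = (N:ℝ) := by
      simp [hq'sum]
    rw [this]; field_simp
  -- diagonal mass
  have hdiagmass : ∀ m, ∑ d, Pc m m d d = (1/(N:ℝ)) * ∑ i, t i m := by
    intro m
    simp only [hPc, ← Finset.mul_sum]
    congr 1
    rw [Finset.sum_comm]
  have hdiagpos : ∀ m, 0 < ∑ d, Pc m m d d := by
    intro m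
    rw [hdiagmass]
    have : 0 < ∑ i, t i m := Finset.sum_pos (fun i _ => htpos i m) ⟨⟨0, hN⟩, mem_univ _⟩
    positivity
  have hdiagle : ∀ m, ∑ d, Pc m m d d ≤ 1 := by
    intro m
    rw [hdiagmass]
    have : ∑ i, t i m ≤ (N:ℝ) := by
      calc ∑ i, t i m ≤ ∑ _i : Fin N, (1:ℝ) := Finset.sum_le_sum (fun i _ => htle i m)
      _ = (N:ℝ) := by simp
    rw [one_div]
    calc (N:ℝ)⁻¹ * ∑ i, t i m ≤ (N:ℝ)⁻¹ * (N:ℝ) := by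
          apply mul_le_mul_of_nonneg_left this (by positivity)
    _ = 1 := inv_mul_cancel₀ hN0
  -- nonnegativity of the three slack pieces
  have hSlognp : Slog ≤ 0 := by
    apply Finset.sum_nonpos
    intro i _
    apply Finset.sum_nonpos
    intro m _
    exact Real.log_nonpos (le_of_lt (htpos i m)) (htle i m)
  have hS1nn : ∀ m, 0 ≤ Ediag m + Real.log D := by
    intro m
    set s : ℝ := ∑ d, Pc m m d d with hs
    have hspos : 0 < s := hdiagpos m
    have hsle : s ≤ 1 := hdiagle m
    have ha : (0:ℝ) < s / D := by positivity
    have h1 : 0 ≤ ∑ d, (Pc m m d d * Real.log (Pc m m d d)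
        - Pc m m d d * Real.log (s/D) - (Pc m m d d - s/D)) :=
      Finset.sum_nonneg fun d _ => slack_nonneg ha (hPcnn m m d d)
    rw [sum_slack] at h1
    simp only [Fintype.card_fin, ← hs] at h1
    have hDs : (D:ℝ) * (s / D) = s := by field_simp
    rw [hDs] at h1
    -- h1 : 0 ≤ Ediag m - s * log (s/D) - (s - s)
    have h2 : Real.log (s/D) = Real.log s - Real.log D :=
      Real.log_div (ne_of_gt hspos) (ne_of_gt hDpos)
    rw [h2] at h1
    have h3 : s - 1 ≤ s * Real.log s := by
      have := ptwise_gibbs (a := 1) one_pos (le_of_lt hspos)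
      simpa using this
    nlinarith [mul_nonneg (sub_nonneg.mpr hsle) (le_of_lt (lt_trans one_pos hlogD))]
  have hS2nn : ∀ m₁ m₂, m₁ ≠ m₂ → 0 ≤ Eoff m₁ m₂ + 2 * Real.log D := by
    intro m₁ m₂ _
    have ha : (0:ℝ) < ((D:ℝ)^2)⁻¹ := by positivity
    have h1 : 0 ≤ ∑ dd : Fin D × Fin D,
        (Pc m₁ m₂ dd.1 dd.2 * Real.log (Pc m₁ m₂ dd.1 dd.2)
          - Pc m₁ m₂ dd.1 dd.2 * Real.log (((D:ℝ)^2)⁻¹)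
          - (Pc m₁ m₂ dd.1 dd.2 - ((D:ℝ)^2)⁻¹)) :=
      Finset.sum_nonneg fun dd _ => slack_nonneg ha (hPcnn m₁ m₂ dd.1 dd.2)
    rw [sum_slack] at h1
    have hcard : (Fintype.card (Fin D × Fin D) : ℝ) = (D:ℝ)^2 := by
      simp [Fintype.card_prod]; ring
    have hsum1 : ∑ dd : Fin D × Fin D, Pc m₁ m₂ dd.1 dd.2 = 1 := by
      rw [Fintype.sum_prod_type]; exact hPcsum m₁ m₂
    have hsumlog : ∑ dd : Fin D × Fin D, Pc m₁ m₂ dd.1 dd.2 * Real.log (Pc m₁ m₂ dd.1 dd.2)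
        = Eoff m₁ m₂ := by
      rw [Fintype.sum_prod_type]
    rw [hsum1, hsumlog, hcard] at h1
    have hloginv : Real.log (((D:ℝ)^2)⁻¹) = -(2 * Real.log D) := by
      rw [Real.log_inv, Real.log_pow]; push_cast; ring
    rw [hloginv] at h1
    have hDD : (D:ℝ)^2 * ((D:ℝ)^2)⁻¹ = 1 := mul_inv_cancel₀ (by positivity)
    nlinarith
  -- the master identity
  have h0 : -(1 / ((N : ℝ) * (M : ℝ))) * Slog +
      (lam / (M : ℝ) ^ 2) * ((∑ m, Ediag m) +
        ∑ m₁, ∑ m₂, if m₁ ≠ m₂ then Eoff m₁ m₂ else 0) =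
      -lam * ((2 * (M : ℝ) - 1) / (M : ℝ)) * Real.log D := hL ▸ hmin
  have e1 : ∑ m, (Ediag m + Real.log D) = (∑ m, Ediag m) + (M:ℝ) * Real.log D := by
    rw [Finset.sum_add_distrib]
    simp [Finset.sum_const, Finset.card_univ]
  have e2 : (∑ m₁, ∑ m₂, if m₁ ≠ m₂ then Eoff m₁ m₂ + 2 * Real.log D else 0) =
      (∑ m₁, ∑ m₂, if m₁ ≠ m₂ then Eoff m₁ m₂ else 0)
        + ((M:ℝ) * ((M:ℝ) - 1)) * (2 * Real.log D) := by
    have inner : ∀ m₁ : Fin M, (∑ m₂, if m₁ ≠ m₂ then Eoff m₁ m₂ + 2 * Real.log D else 0) =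
        (∑ m₂, if m₁ ≠ m₂ then Eoff m₁ m₂ else 0) + ((M:ℝ) - 1) * (2 * Real.log D) := by
      intro m₁
      have split : ∀ m₂ : Fin M, (if m₁ ≠ m₂ then Eoff m₁ m₂ + 2 * Real.log D else 0) =
          (if m₁ ≠ m₂ then Eoff m₁ m₂ else 0)
            + ((if m₁ = m₂ then (0:ℝ) else 2 * Real.log D)) := by
        intro m₂; by_cases h : m₁ = m₂ <;> simp [h]
      rw [Finset.sum_congr rfl (fun m₂ _ => split m₂), Finset.sum_add_distrib]
      congr 1
      have hA : ∑ m₂ : Fin M, ((if m₁ = m₂ then (0:ℝ) else 2 * Real.log D)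
          + (if m₁ = m₂ then 2 * Real.log D else 0)) = (M:ℝ) * (2 * Real.log D) := by
        have : ∀ m₂ : Fin M, ((if m₁ = m₂ then (0:ℝ) else 2 * Real.log D)
            + (if m₁ = m₂ then 2 * Real.log D else 0)) = 2 * Real.log D := by
          intro m₂; by_cases h : m₁ = m₂ <;> simp [h]
        rw [Finset.sum_congr rfl (fun m₂ _ => this m₂)]
        simp [Finset.sum_const, Finset.card_univ, mul_assoc]
      have hB : ∑ m₂ : Fin M, (if m₁ = m₂ then 2 * Real.log D else 0) = 2 * Real.log D := by
        rw [Finset.sum_ite_eq]; simp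
      rw [Finset.sum_add_distrib, hB] at hA
      linarith
    rw [Finset.sum_congr rfl (fun m₁ _ => inner m₁), Finset.sum_add_distrib]
    congr 1
    simp [Finset.sum_const, Finset.card_univ]
    ring
  have key : (lam/(M:ℝ)^2) * ((M:ℝ) * Real.log D + ((M:ℝ) * ((M:ℝ)-1)) * (2 * Real.log D)) =
      lam * ((2*(M:ℝ)-1)/(M:ℝ)) * Real.log D := by
    field_simp; ring
  have master : (1/((N:ℝ)*(M:ℝ))) * (-Slog) +
      ((lam/(M:ℝ)^2) * (∑ m, (Ediag m + Real.log D)) +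
       (lam/(M:ℝ)^2) * (∑ m₁, ∑ m₂, if m₁ ≠ m₂ then Eoff m₁ m₂ + 2 * Real.log D else 0)) = 0 := by
    rw [e1, e2]
    linear_combination h0 + key
  -- the three nonnegative pieces
  have hAnn : 0 ≤ -Slog := by linarith
  have hS1nn' : 0 ≤ ∑ m, (Ediag m + Real.log D) :=
    Finset.sum_nonneg fun m _ => hS1nn m
  have hS2term : ∀ m₁ m₂ : Fin M,
      0 ≤ (if m₁ ≠ m₂ then Eoff m₁ m₂ + 2 * Real.log D else 0) := by
    intro m₁ m₂; by_cases h : m₁ ≠ m₂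
    · simpa [h] using hS2nn m₁ m₂ h
    · simp [h]
  have hS2nn' : 0 ≤ ∑ m₁, ∑ m₂, if m₁ ≠ m₂ then Eoff m₁ m₂ + 2 * Real.log D else 0 :=
    Finset.sum_nonneg fun m₁ _ => Finset.sum_nonneg fun m₂ _ => hS2term m₁ m₂
  have hc1 : (0:ℝ) < 1/((N:ℝ)*(M:ℝ)) := by positivity
  have hc2 : (0:ℝ) < lam/(M:ℝ)^2 := by positivity
  obtain ⟨hA0, hS10, hS20⟩ := three_nonneg_zero hc1 hc2 hAnn hS1nn' hS2nn' master
  have hSlog0 : Slog = 0 := by linarith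
  -- extract: all inner products equal 1
  have hnegSlog : ∑ i, ∑ m, (-Real.log (t i m)) = 0 := by
    simp only [Finset.sum_neg_distrib]
    rw [show (∑ i, ∑ m, Real.log (t i m)) = Slog from rfl] at *
    simp [hSlog0]
  have hlogt0 : ∀ i m, Real.log (t i m) = 0 := by
    intro i m
    have h1 := (Finset.sum_eq_zero_iff_of_nonneg (fun i _ => Finset.sum_nonneg fun m _ =>
      neg_nonneg.mpr (Real.log_nonpos (htpos i m).le (htle i m)))).mp hnegSlog i (mem_univ i)
    have h2 := (Finset.sum_eq_zero_iff_of_nonneg (fun m _ =>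
      neg_nonneg.mpr (Real.log_nonpos (htpos i m).le (htle i m)))).mp h1 m (mem_univ m)
    linarith
  have ht1 : ∀ i m, t i m = 1 := by
    intro i m
    rcases Real.log_eq_zero.mp (hlogt0 i m) with h | h | h
    · exact absurd h (htpos i m).ne'
    · exact h
    · nlinarith [htpos i m]
  have honehot : ∀ i m, q' i m = q'' i m ∧
      ∃ dstar, q' i m dstar = 1 ∧ ∀ d, d ≠ dstar → q' i m d = 0 := fun i m =>
    onehot_of_inner_eq_one _ _ (hq'nonneg i m) (hq'sum i m)
      (hq''nonneg i m) (hq''sum i m) (ht1 i m)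
  have hq''eq : ∀ i m d, q'' i m d = q' i m d := fun i m d =>
    (congrFun (honehot i m).1 d).symm
  have hidem : ∀ i m d, q' i m d * q' i m d = q' i m d := by
    intro i m d
    obtain ⟨_, dstar, h1, h2⟩ := honehot i m
    by_cases hd : d = dstar
    · rw [hd, h1]; ring
    · rw [h2 d hd]; ring
  have hPceqp : ∀ m d, Pc m m d d = p m d := by
    intro m d
    rw [hPc, hp]
    congr 1
    apply Finset.sum_congr rfl
    intro i _
    rw [hq''eq i m d, hidem i m d]
  have hs1 : ∀ m, ∑ d, Pc m m d d = 1 := by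
    intro m
    rw [hdiagmass m]
    have : ∑ i, t i m = (N:ℝ) := by
      rw [Finset.sum_congr rfl (fun i _ => ht1 i m)]; simp
    rw [this]; field_simp
  -- diagonal Pc = 1/D
  have hEd0 : ∀ m, Ediag m + Real.log D = 0 := by
    intro m
    exact (Finset.sum_eq_zero_iff_of_nonneg (fun m _ => hS1nn m)).mp hS10 m (mem_univ m)
  have hPcdiag : ∀ m d, Pc m m d d = (D:ℝ)⁻¹ := by
    intro m d
    have ha : (0:ℝ) < (D:ℝ)⁻¹ := by positivity
    have hsum : ∑ d', (Pc m m d' d' * Real.log (Pc m m d' d')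
        - Pc m m d' d' * Real.log ((D:ℝ)⁻¹) - (Pc m m d' d' - (D:ℝ)⁻¹)) = 0 := by
      rw [sum_slack]
      simp only [Fintype.card_fin]
      rw [hs1 m, Real.log_inv, mul_inv_cancel₀ hDpos.ne']
      have := hEd0 m
      simp only [hEdiag] at this ⊢
      linarith
    have := (Finset.sum_eq_zero_iff_of_nonneg (fun d' _ =>
      slack_nonneg ha (hPcnn m m d' d'))).mp hsum d (mem_univ d)
    exact slack_eq_zero ha (hPcnn m m d d) this
  -- off-diagonal Pc = 1/D^2
  have hEo0 : ∀ m₁ m₂, m₁ ≠ m₂ → Eoff m₁ m₂ + 2 * Real.log D = 0 := by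
    intro m₁ m₂ hne
    have h1 := (Finset.sum_eq_zero_iff_of_nonneg (fun m₁ _ =>
      Finset.sum_nonneg fun m₂ _ => hS2term m₁ m₂)).mp hS20 m₁ (mem_univ m₁)
    have h2 := (Finset.sum_eq_zero_iff_of_nonneg (fun m₂ _ =>
      hS2term m₁ m₂)).mp h1 m₂ (mem_univ m₂)
    simpa [hne] using h2
  have hPcoff : ∀ m₁ m₂, m₁ ≠ m₂ → ∀ d₁ d₂, Pc m₁ m₂ d₁ d₂ = ((D:ℝ)^2)⁻¹ := by
    intro m₁ m₂ hne d₁ d₂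
    have ha : (0:ℝ) < ((D:ℝ)^2)⁻¹ := by positivity
    have hcard : (Fintype.card (Fin D × Fin D) : ℝ) = (D:ℝ)^2 := by
      simp [Fintype.card_prod]; ring
    have hsum1 : ∑ dd : Fin D × Fin D, Pc m₁ m₂ dd.1 dd.2 = 1 := by
      rw [Fintype.sum_prod_type]; exact hPcsum m₁ m₂
    have hsumlog : ∑ dd : Fin D × Fin D,
        Pc m₁ m₂ dd.1 dd.2 * Real.log (Pc m₁ m₂ dd.1 dd.2) = Eoff m₁ m₂ := by
      rw [Fintype.sum_prod_type]
    have hsum : ∑ dd : Fin D × Fin D, (Pc m₁ m₂ dd.1 dd.2 * Real.log (Pc m₁ m₂ dd.1 dd.2)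
        - Pc m₁ m₂ dd.1 dd.2 * Real.log (((D:ℝ)^2)⁻¹)
        - (Pc m₁ m₂ dd.1 dd.2 - ((D:ℝ)^2)⁻¹)) = 0 := by
      rw [sum_slack, hsum1, hsumlog, hcard, Real.log_inv,
        mul_inv_cancel₀ (show ((D:ℝ)^2) ≠ 0 by positivity)]
      have := hEo0 m₁ m₂ hne
      have hlp : Real.log ((D:ℝ)^2) = 2 * Real.log D := by
        rw [Real.log_pow]; push_cast; ring
      rw [hlp]
      linarith
    have := (Finset.sum_eq_zero_iff_of_nonneg (fun dd _ =>
      slack_nonneg ha (hPcnn m₁ m₂ dd.1 dd.2))).mp hsum (d₁, d₂) (mem_univ _)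
    exact slack_eq_zero ha (hPcnn m₁ m₂ d₁ d₂) this
  have hPeqPc : ∀ m₁ m₂ d₁ d₂, P m₁ m₂ d₁ d₂ = Pc m₁ m₂ d₁ d₂ := by
    intro m₁ m₂ d₁ d₂
    rw [hP, hPc]
    congr 1
    apply Finset.sum_congr rfl
    intro i _
    rw [hq''eq i m₂ d₂]
  have hpunif : ∀ m d, p m d = 1 / (D:ℝ) := by
    intro m d
    rw [← hPceqp m d, hPcdiag m d, one_div]
  refine ⟨honehot, hpunif, ?_, ?_⟩
  · intro m₁ m₂ hne d₁ d₂
    refine ⟨hPeqPc m₁ m₂ d₁ d₂, ?_⟩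
    rw [hPeqPc m₁ m₂ d₁ d₂, hPcoff m₁ m₂ hne d₁ d₂, one_div]
  · intro m₁ m₂ hne
    apply Finset.sum_eq_zero
    intro d₁ _
    apply Finset.sum_eq_zero
    intro d₂ _
    rw [hPeqPc m₁ m₂ d₁ d₂, hPcoff m₁ m₂ hne d₁ d₂, hpunif m₁ d₁, hpunif m₂ d₂]
    have : ((D:ℝ)^2)⁻¹ / (1/(D:ℝ) * (1/(D:ℝ))) = 1 := by
      field_simp
    rw [this, Real.log_one, mul_zero]
end
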